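/- arXiv:1708.02516 — 3 statements merged into one kernel-verified Lean document; each statement's English description precedes it below -/
import Mathlib

section
/- Let X be a first countable Hausdorff real topological vector space, μ a σ-finite nonzero Borel measure on X that is finite on bounded sets, and K a bounded open neighbourhood of the origin. Let u ∈ supp(μ), and let E be a nonempty subset of X such that for every v ∈ E the translated measure μ_v (defined by μ_v(A) := μ(A−v)) is absolutely continuous with respect to μ with a representative dμ_v/dμ of its Radon–Nikodym derivative that is continuous on some open neighbourhood of u. If u is an E-weak mode of μ, then sup_{v∈E} (dμ_v/dμ)(u) ≤ 1. -/
open MeasureTheory Filter Set Topology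
open scoped ENNReal NNReal

/-- `fK μ K x r = μ(x + r • K)`, the mass of the scaled translated copy of `K`. -/
noncomputable def fK {X : Type*} [AddCommGroup X] [Module ℝ X] [MeasurableSpace X]
    (μ : Measure X) (K : Set X) (x : X) (r : ℝ) : ℝ≥0∞ :=
  μ ((fun y => x + r • y) '' K)

/-- The topological support of a Borel measure. -/
def measSupport {X : Type*} [TopologicalSpace X] [MeasurableSpace X]
    (μ : Measure X) : Set X :=
  {x | ∀ U : Set X, IsOpen U → x ∈ U → 0 < μ U}

/-- `u` is a strong mode of `μ` (w.r.t. the reference neighbourhood `K`). -/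
def IsStrongMode {X : Type*} [AddCommGroup X] [Module ℝ X] [TopologicalSpace X]
    [MeasurableSpace X] (μ : Measure X) (K : Set X) (u : X) : Prop :=
  Tendsto (fun r : ℝ => (⨆ z : X, fK μ K z r) / fK μ K u r) (𝓝[>] (0:ℝ)) (𝓝 1)

/-- `u` is an `E`-strong mode of `μ`. -/
def IsEStrongMode {X : Type*} [AddCommGroup X] [Module ℝ X] [TopologicalSpace X]
    [MeasurableSpace X] (μ : Measure X) (K : Set X) (E : Set X) (u : X) : Prop :=
  u ∈ measSupport μ ∧
    limsup (fun r : ℝ => (⨆ v ∈ E, fK μ K (u - v) r) / fK μ K u r) (𝓝[>] (0:ℝ)) ≤ 1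

/-- `u` is an `E`-weak mode of `μ`. -/
def IsEWeakMode {X : Type*} [AddCommGroup X] [Module ℝ X] [TopologicalSpace X]
    [MeasurableSpace X] (μ : Measure X) (K : Set X) (E : Set X) (u : X) : Prop :=
  u ∈ measSupport μ ∧
    ∀ v ∈ E, limsup (fun r : ℝ => fK μ K (u - v) r / fK μ K u r) (𝓝[>] (0:ℝ)) ≤ 1

/-- The uniformity condition for the pair `(u, E)`. -/
def UniformityCondition {X : Type*} [AddCommGroup X] [Module ℝ X]
    [MeasurableSpace X] (μ : Measure X) (K : Set X) (E : Set X) (u : X) : Prop :=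
  ∃ v ∈ E, ∃ rs : ℝ, rs ∈ Set.Ioo (0:ℝ) 1 ∧
    ∀ r ∈ Set.Ioo (0:ℝ) rs, fK μ K (u - v) r = ⨆ w ∈ E, fK μ K (u - w) r

/-- The coincident limiting ratios condition for the pair `(u, E)`. -/
def CLRCondition {X : Type*} [AddCommGroup X] [Module ℝ X] [MeasurableSpace X]
    (μ : Measure X) (K : Set X) (E : Set X) (u : X) : Prop :=
  limsup (fun r : ℝ => (⨆ v ∈ E, fK μ K (u - v) r) / fK μ K u r) (𝓝[>] (0:ℝ)) =
    limsup (fun r : ℝ => (⨆ z : X, fK μ K z r) / fK μ K u r) (𝓝[>] (0:ℝ))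

open scoped Pointwise

/-!
If `g = dμ_v/dμ` is continuous at `u` and `c < g u`, then `g ≥ c` near `u`, and since `K` is
bounded, `K(u, r)` lies in that neighbourhood for small `r`. Hence
`f(u - v, r) = μ_v(K(u, r)) = ∫_{K(u, r)} g dμ ≥ c f(u, r)`, so the ratios `f(u - v, r) / f(u, r)`
eventually exceed every `c < g u`, and the weak-mode condition bounds their limsup by `1`.
-/

section AffineImage

variable {𝕜 X : Type*} [AddCommGroup X]

theorem affine_image_eq_vadd_smul [SMul 𝕜 X] (K : Set X) (x : X) (r : 𝕜) :
    (fun y => x + r • y) '' K = x +ᵥ r • K := by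
  rw [← image_smul, ← image_vadd, image_image]
  rfl

theorem affine_image_sub_eq_preimage_add_right [SMul 𝕜 X] (K : Set X) (x v : X) (r : 𝕜) :
    (fun y => (x - v) + r • y) '' K = (· + v) ⁻¹' ((fun y => x + r • y) '' K) := by
  rw [← image_add_right', image_image]
  congr 1
  funext y
  abel

variable [TopologicalSpace X]

theorem isOpen_affine_image [ContinuousAdd X] [GroupWithZero 𝕜] [MulAction 𝕜 X]
    [ContinuousConstSMul 𝕜 X] {K : Set X} (hK : IsOpen K) (x : X) {r : 𝕜} (hr : r ≠ 0) :
    IsOpen ((fun y => x + r • y) '' K) := by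
  rw [affine_image_eq_vadd_smul]
  exact (hK.smul₀ hr).vadd x

theorem Bornology.IsVonNBounded.affine_image [NormedField 𝕜] [Module 𝕜 X] [ContinuousAdd X]
    [ContinuousSMul 𝕜 X] {K : Set X} (hK : IsVonNBounded 𝕜 K) (x : X) (r : 𝕜) :
    IsVonNBounded 𝕜 ((fun y => x + r • y) '' K) := by
  rw [affine_image_eq_vadd_smul, ← image_smul]
  exact (hK.image (σ := RingHom.id 𝕜) (r • ContinuousLinearMap.id 𝕜 X)).vadd x

theorem eventually_affine_image_subset [NormedDivisionRing 𝕜] [Module 𝕜 X] [ContinuousAdd X]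
    {K : Set X} (hK : Bornology.IsVonNBounded 𝕜 K) {x : X} {S : Set X} (hS : S ∈ 𝓝 x) :
    ∀ᶠ r in 𝓝 (0 : 𝕜), (fun y => x + r • y) '' K ⊆ S := by
  have hS₀ : (x + ·) ⁻¹' S ∈ 𝓝 (0 : X) :=
    (continuous_const_add x).continuousAt.preimage_mem_nhds (by rwa [add_zero])
  filter_upwards [tendsto_smallSets_iff.mp hK.tendsto_smallSets_nhds _ hS₀] with r hr
  rintro _ ⟨y, hy, rfl⟩
  exact hr (smul_mem_smul_set hy)

end AffineImage

theorem mul_measure_le_withDensity_apply {α : Type*} [MeasurableSpace α] {μ : Measure α}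
    {g : α → ℝ≥0∞} {s : Set α} (hs : MeasurableSet s) {c : ℝ≥0∞} (hc : ∀ y ∈ s, c ≤ g y) :
    c * μ s ≤ μ.withDensity g s :=
  calc c * μ s = ∫⁻ _ in s, c ∂μ := (setLIntegral_const s c).symm
    _ ≤ ∫⁻ y in s, g y ∂μ := setLIntegral_mono' hs hc
    _ ≤ μ.withDensity g s := withDensity_apply_le g s

section fK

variable {X : Type*} [AddCommGroup X] [Module ℝ X] [MeasurableSpace X]

theorem fK_sub_eq_map_add_right_apply [MeasurableAdd X] (μ : Measure X) (K : Set X)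
    (x v : X) (r : ℝ) :
    fK μ K (x - v) r = μ.map (· + v) ((fun y => x + r • y) '' K) := by
  rw [fK, affine_image_sub_eq_preimage_add_right]
  exact ((MeasurableEquiv.addRight v).map_apply _).symm

variable [TopologicalSpace X]

theorem fK_pos_of_mem_measSupport [ContinuousAdd X] [ContinuousConstSMul ℝ X]
    {μ : Measure X} {K : Set X} (hK : IsOpen K) (hK0 : (0 : X) ∈ K) {x : X}
    (hx : x ∈ measSupport μ) {r : ℝ} (hr : r ≠ 0) : 0 < fK μ K x r :=
  hx _ (isOpen_affine_image hK x hr) ⟨0, hK0, by simp⟩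

theorem fK_ne_top [ContinuousAdd X] [ContinuousSMul ℝ X] {μ : Measure X}
    (hfin : ∀ s : Set X, Bornology.IsVonNBounded ℝ s → μ s ≠ ⊤) {K : Set X}
    (hK : Bornology.IsVonNBounded ℝ K) (x : X) (r : ℝ) : fK μ K x r ≠ ⊤ :=
  hfin _ (hK.affine_image x r)

theorem le_limsup_fK_ratio_of_map_add_right_eq_withDensity [ContinuousAdd X]
    [ContinuousSMul ℝ X] [BorelSpace X] {μ : Measure X}
    (hfin : ∀ s : Set X, Bornology.IsVonNBounded ℝ s → μ s ≠ ⊤) {K : Set X} (hKopen : IsOpen K)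
    (hK0 : (0 : X) ∈ K) (hKbdd : Bornology.IsVonNBounded ℝ K) {u v : X}
    (hu : u ∈ measSupport μ) {g : X → ℝ≥0∞} (hdens : μ.map (· + v) = μ.withDensity g)
    (hg : ContinuousAt g u) :
    g u ≤ limsup (fun r : ℝ => fK μ K (u - v) r / fK μ K u r) (𝓝[>] (0 : ℝ)) := by
  refine le_of_forall_lt_imp_le_of_dense fun c hc =>
    le_limsup_of_frequently_le' (Eventually.frequently ?_)
  have hsub : ∀ᶠ r in 𝓝[>] (0 : ℝ), (fun y => u + r • y) '' K ⊆ {y | c ≤ g y} :=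
    nhdsWithin_le_nhds <| eventually_affine_image_subset hKbdd <|
      (hg.eventually_const_lt hc).mono fun _ => le_of_lt
  filter_upwards [hsub, self_mem_nhdsWithin] with r hr (hr0 : 0 < r)
  rw [ENNReal.le_div_iff_mul_le (Or.inl (fK_pos_of_mem_measSupport hKopen hK0 hu hr0.ne').ne')
    (Or.inl (fK_ne_top hfin hKbdd u r)), fK_sub_eq_map_add_right_apply, hdens]
  exact mul_measure_le_withDensity_apply
    (isOpen_affine_image hKopen u hr0.ne').measurableSet hr

end fK

theorem sup_density_le_one_of_Eweak_general
    {X : Type*} [AddCommGroup X] [Module ℝ X] [TopologicalSpace X]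
    [IsTopologicalAddGroup X] [ContinuousSMul ℝ X]
    [MeasurableSpace X] [BorelSpace X]
    (μ : Measure X)
    (hfin : ∀ s : Set X, Bornology.IsVonNBounded ℝ s → μ s ≠ ⊤)
    (K : Set X) (hKopen : IsOpen K) (hK0 : (0:X) ∈ K)
    (hKbdd : Bornology.IsVonNBounded ℝ K)
    (u : X) (hu : u ∈ measSupport μ)
    (E : Set X)
    (g : X → X → ℝ≥0∞)
    (hrep : ∀ v ∈ E, Measurable (g v) ∧ μ.map (· + v) ≪ μ ∧
      μ.map (· + v) = μ.withDensity (g v) ∧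
      ∃ U : Set X, IsOpen U ∧ u ∈ U ∧ ContinuousOn (g v) U)
    (hweak : IsEWeakMode μ K E u) :
    (⨆ v ∈ E, g v u) ≤ 1 := by
  refine iSup₂_le fun v hv => ?_
  obtain ⟨-, -, hdens, U, hUopen, huU, hgU⟩ := hrep v hv
  calc g v u ≤ limsup (fun r : ℝ => fK μ K (u - v) r / fK μ K u r) (𝓝[>] (0 : ℝ)) :=
        le_limsup_fK_ratio_of_map_add_right_eq_withDensity hfin hKopen hK0 hKbdd hu hdens
          (hgU.continuousAt (hUopen.mem_nhds huU))
    _ ≤ 1 := hweak.2 v hv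

/-- Corollary 4.5. Suppose that for each `v ∈ E` the translate
`μ_v = μ.map (· + v)` is absolutely continuous w.r.t. `μ` with representative `g v` of
`dμ_v/dμ` continuous on some open neighbourhood of `u`. If `u` is an `E`-weak mode,
then `sup_{v ∈ E} (dμ_v/dμ)(u) ≤ 1`. -/
theorem sup_density_le_one_of_Eweak
    {X : Type*} [AddCommGroup X] [Module ℝ X] [TopologicalSpace X]
    [IsTopologicalAddGroup X] [ContinuousSMul ℝ X] [T2Space X]
    [FirstCountableTopology X] [MeasurableSpace X] [BorelSpace X]
    (μ : Measure X) [SigmaFinite μ] (hμ : μ ≠ 0)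
    (hfin : ∀ s : Set X, Bornology.IsVonNBounded ℝ s → μ s ≠ ⊤)
    (K : Set X) (hKopen : IsOpen K) (hK0 : (0:X) ∈ K)
    (hKbdd : Bornology.IsVonNBounded ℝ K)
    (u : X) (hu : u ∈ measSupport μ)
    (E : Set X) (hE : E.Nonempty)
    (g : X → X → ℝ≥0∞)
    (hrep : ∀ v ∈ E, Measurable (g v) ∧ μ.map (· + v) ≪ μ ∧
      μ.map (· + v) = μ.withDensity (g v) ∧
      ∃ U : Set X, IsOpen U ∧ u ∈ U ∧ ContinuousOn (g v) U)
    (hweak : IsEWeakMode μ K E u) :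
    (⨆ v ∈ E, g v u) ≤ 1 :=
  sup_density_le_one_of_Eweak_general μ hfin K hKopen hK0 hKbdd u hu E g hrep hweak
end

section
/- Let X be a first countable Hausdorff real topological vector space, μ a σ-finite nonzero Borel measure on X that is finite on bounded sets, and K a bounded open neighbourhood of the origin. Let u ∈ supp(μ), and let E be a nonempty subset of X such that for every v ∈ E the translated measure μ_v (defined by μ_v(A) := μ(A−v)) is absolutely continuous with respect to μ with a representative dμ_v/dμ of its Radon–Nikodym derivative that is continuous on some open neighbourhood of u. Suppose u is an E-weak mode of μ. If the function x ↦ sup_{v∈E} (dμ_v/dμ)(x) is continuous at u, then u is an E-strong mode of μ. -/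
open MeasureTheory Filter Set Topology
open scoped ENNReal NNReal

/-!
Translation by `v` has density `g v`, so `f(u - v, r) = ∫_{u + rK} g v dμ` and the ratio
`f(u - v, r) / f(u, r)` is the `μ`-average of `g v` over the shrinking set `u + rK`. At a point of
lower semicontinuity such averages eventually exceed anything below `g v u`, so the weak-mode
hypothesis forces `g v u ≤ 1` for every `v ∈ E`. Bounding each `g v` by `sup_{w ∈ E} g w`, the
strong-mode ratio is at most the average of that supremum, whose limsup is at most its value at
`u` by upper semicontinuity, hence at most `1`.
-/

open scoped Pointwise

section DensityRatio

variable {X ι : Type*} [TopologicalSpace X] [MeasurableSpace X] {μ : Measure X}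
  {A : ι → Set X} {l : Filter ι} {G : X → ℝ≥0∞} {u : X}

-- No positivity or finiteness of `μ (A i)` is needed: in `ℝ≥0∞`, `0 / 0 = 0` and `a / ∞ = 0`.
theorem limsup_setLIntegral_div_le (hA : Tendsto A l (𝓝 u).smallSets)
    (hmeas : ∀ᶠ i in l, MeasurableSet (A i)) (hG : UpperSemicontinuousAt G u) :
    limsup (fun i => (∫⁻ x in A i, G x ∂μ) / μ (A i)) l ≤ G u := by
  refine le_of_forall_gt_imp_ge_of_dense fun c hc => ?_
  refine limsup_le_of_le (by isBoundedDefault) ?_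
  filter_upwards [hA.eventually (eventually_smallSets_subset.2 (hG c hc)), hmeas]
    with i hsub hi
  refine ENNReal.div_le_of_le_mul ?_
  calc ∫⁻ x in A i, G x ∂μ ≤ ∫⁻ _ in A i, c ∂μ :=
        setLIntegral_mono' hi fun x hx => (hsub hx).le
    _ = c * μ (A i) := setLIntegral_const _ _

theorem le_liminf_setLIntegral_div (hA : Tendsto A l (𝓝 u).smallSets)
    (hmeas : ∀ᶠ i in l, MeasurableSet (A i)) (hpos : ∀ᶠ i in l, μ (A i) ≠ 0)
    (hfin : ∀ᶠ i in l, μ (A i) ≠ ∞) (hG : LowerSemicontinuousAt G u) :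
    G u ≤ liminf (fun i => (∫⁻ x in A i, G x ∂μ) / μ (A i)) l := by
  refine le_of_forall_lt_imp_le_of_dense fun c hc => ?_
  refine le_liminf_of_le (by isBoundedDefault) ?_
  filter_upwards [hA.eventually (eventually_smallSets_subset.2 (hG c hc)), hmeas, hpos, hfin]
    with i hsub hi hpos hfin
  refine (ENNReal.le_div_iff_mul_le (.inl hpos) (.inl hfin)).2 ?_
  calc c * μ (A i) = ∫⁻ _ in A i, c ∂μ := (setLIntegral_const _ _).symm
    _ ≤ ∫⁻ x in A i, G x ∂μ := setLIntegral_mono' hi fun x hx => (hsub hx).le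

end DensityRatio

theorem Bornology.IsVonNBounded.smul_set {𝕜 E : Type*} [NontriviallyNormedField 𝕜]
    [AddCommGroup E] [Module 𝕜 E] [TopologicalSpace E] [ContinuousConstSMul 𝕜 E] {s : Set E}
    (hs : Bornology.IsVonNBounded 𝕜 s) (c : 𝕜) : Bornology.IsVonNBounded 𝕜 (c • s) := by
  simpa [image_smul] using hs.image (σ := RingHom.id 𝕜) (c • ContinuousLinearMap.id 𝕜 E)

section Translates

variable {X : Type*} [AddCommGroup X] [Module ℝ X]

theorem fK_eq_measure_vadd_smul [MeasurableSpace X] (μ : Measure X) (K : Set X) (x : X)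
    (r : ℝ) : fK μ K x r = μ (x +ᵥ r • K) := by
  rw [fK, ← image_smul, ← image_vadd, image_image]
  rfl

theorem fK_sub_eq_setLIntegral [MeasurableSpace X] [MeasurableAdd X] {μ : Measure X}
    {K : Set X} {x v : X} {r : ℝ} {g : X → ℝ≥0∞} (hg : μ.map (· + v) = μ.withDensity g)
    (hs : MeasurableSet (x +ᵥ r • K)) :
    fK μ K (x - v) r = ∫⁻ y in x +ᵥ r • K, g y ∂μ := by
  have hpre : (· + v) ⁻¹' (x +ᵥ r • K) = (x - v) +ᵥ r • K := by
    ext y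
    simp only [mem_preimage, mem_vadd_set, vadd_eq_add, sub_add_eq_add_sub, sub_eq_iff_eq_add]
  rw [fK_eq_measure_vadd_smul, ← hpre, ← Measure.map_apply (measurable_add_const v) hs, hg,
    withDensity_apply _ hs]

theorem tendsto_vadd_smul_smallSets [TopologicalSpace X] [IsTopologicalAddGroup X] {K : Set X}
    (hK : Bornology.IsVonNBounded ℝ K) (x : X) :
    Tendsto (fun r : ℝ => x +ᵥ r • K) (𝓝 0) (𝓝 x).smallSets := by
  have h := ((continuous_const_vadd x).tendsto 0).image_smallSets.comp hK.tendsto_smallSets_nhds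
  rw [vadd_eq_add, add_zero] at h
  simpa only [Function.comp_def, image_vadd] using h

variable [TopologicalSpace X] [IsTopologicalAddGroup X] [ContinuousSMul ℝ X] {K : Set X}

theorem isOpen_vadd_smul (hK : IsOpen K) (x : X) {r : ℝ} (hr : r ≠ 0) :
    IsOpen (x +ᵥ r • K) :=
  (hK.smul₀ hr).vadd x

variable [MeasurableSpace X] [BorelSpace X] {μ : Measure X} {u : X}

theorem eventually_measurableSet_vadd_smul (hK : IsOpen K) (x : X) :
    ∀ᶠ r in 𝓝[>] (0 : ℝ), MeasurableSet (x +ᵥ r • K) :=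
  eventually_mem_nhdsWithin.mono fun _ hr => (isOpen_vadd_smul hK x hr.ne').measurableSet

theorem le_liminf_fK_sub_div_fK (hKopen : IsOpen K) (hKbdd : Bornology.IsVonNBounded ℝ K)
    (hpos : ∀ᶠ r in 𝓝[>] 0, fK μ K u r ≠ 0) (hfin : ∀ᶠ r in 𝓝[>] 0, fK μ K u r ≠ ∞)
    {v : X} {g : X → ℝ≥0∞} (hg : μ.map (· + v) = μ.withDensity g)
    (hgu : LowerSemicontinuousAt g u) :
    g u ≤ liminf (fun r => fK μ K (u - v) r / fK μ K u r) (𝓝[>] 0) := by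
  have hmeas := eventually_measurableSet_vadd_smul hKopen u
  simp only [fK_eq_measure_vadd_smul] at hpos hfin
  calc g u ≤ liminf (fun r => (∫⁻ x in u +ᵥ r • K, g x ∂μ) / μ (u +ᵥ r • K)) (𝓝[>] 0) :=
        le_liminf_setLIntegral_div ((tendsto_vadd_smul_smallSets hKbdd u).mono_left
          nhdsWithin_le_nhds) hmeas hpos hfin hgu
    _ = liminf (fun r => fK μ K (u - v) r / fK μ K u r) (𝓝[>] 0) :=
        liminf_congr <| hmeas.mono fun r hr => by
          rw [fK_sub_eq_setLIntegral hg hr, fK_eq_measure_vadd_smul]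

theorem limsup_iSup_fK_sub_div_fK_le (hKopen : IsOpen K) (hKbdd : Bornology.IsVonNBounded ℝ K)
    {E : Set X} {g : X → X → ℝ≥0∞} (hg : ∀ v ∈ E, μ.map (· + v) = μ.withDensity (g v))
    (hGu : UpperSemicontinuousAt (fun x => ⨆ v ∈ E, g v x) u) :
    limsup (fun r => (⨆ v ∈ E, fK μ K (u - v) r) / fK μ K u r) (𝓝[>] 0) ≤ ⨆ v ∈ E, g v u := by
  have hmeas := eventually_measurableSet_vadd_smul hKopen u
  calc limsup (fun r => (⨆ v ∈ E, fK μ K (u - v) r) / fK μ K u r) (𝓝[>] 0)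
      ≤ limsup (fun r => (∫⁻ x in u +ᵥ r • K, ⨆ v ∈ E, g v x ∂μ) / μ (u +ᵥ r • K)) (𝓝[>] 0) := by
        refine limsup_le_limsup ?_
        filter_upwards [hmeas] with r hr
        rw [fK_eq_measure_vadd_smul]
        refine ENNReal.div_le_div_right (iSup₂_le fun v hv => ?_) _
        rw [fK_sub_eq_setLIntegral (hg v hv) hr]
        exact lintegral_mono fun x => le_iSup₂ (f := fun v _ => g v x) v hv
    _ ≤ ⨆ v ∈ E, g v u :=
        limsup_setLIntegral_div_le ((tendsto_vadd_smul_smallSets hKbdd u).mono_left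
          nhdsWithin_le_nhds) hmeas hGu

end Translates

theorem Estrong_of_Eweak_of_continuous_sup_density_general
    {X : Type*} [AddCommGroup X] [Module ℝ X] [TopologicalSpace X]
    [IsTopologicalAddGroup X] [ContinuousSMul ℝ X]
    [MeasurableSpace X] [BorelSpace X]
    (μ : Measure X)
    (hfin : ∀ s : Set X, Bornology.IsVonNBounded ℝ s → μ s ≠ ⊤)
    (K : Set X) (hKopen : IsOpen K) (hK0 : (0:X) ∈ K)
    (hKbdd : Bornology.IsVonNBounded ℝ K)
    (u : X) (hu : u ∈ measSupport μ)
    (E : Set X)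
    (g : X → X → ℝ≥0∞)
    (hrep : ∀ v ∈ E, Measurable (g v) ∧ μ.map (· + v) ≪ μ ∧
      μ.map (· + v) = μ.withDensity (g v) ∧
      ∃ U : Set X, IsOpen U ∧ u ∈ U ∧ ContinuousOn (g v) U)
    (hweak : IsEWeakMode μ K E u)
    (hcont : ContinuousAt (fun x : X => ⨆ v ∈ E, g v x) u) :
    IsEStrongMode μ K E u := by
  have hu_mem : ∀ r : ℝ, u ∈ u +ᵥ r • K := fun r => by
    simpa using vadd_mem_vadd_set (a := u) (smul_mem_smul_set (a := r) hK0)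
  have hpos : ∀ᶠ r in 𝓝[>] (0 : ℝ), fK μ K u r ≠ 0 := eventually_mem_nhdsWithin.mono fun r hr => by
    rw [fK_eq_measure_vadd_smul]
    exact (hu _ (isOpen_vadd_smul hKopen u hr.ne') (hu_mem r)).ne'
  have hfinite : ∀ᶠ r in 𝓝[>] (0 : ℝ), fK μ K u r ≠ ∞ := .of_forall fun r => by
    rw [fK_eq_measure_vadd_smul]
    exact hfin _ ((hKbdd.smul_set r).vadd u)
  have hdensity_le_one : ∀ v ∈ E, g v u ≤ 1 := by
    intro v hv
    obtain ⟨-, -, hg, U, hU, huU, hgU⟩ := hrep v hv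
    calc g v u ≤ liminf (fun r => fK μ K (u - v) r / fK μ K u r) (𝓝[>] 0) :=
          le_liminf_fK_sub_div_fK hKopen hKbdd hpos hfinite hg
            (hgU.continuousAt (hU.mem_nhds huU)).lowerSemicontinuousAt
      _ ≤ limsup (fun r => fK μ K (u - v) r / fK μ K u r) (𝓝[>] 0) := liminf_le_limsup
      _ ≤ 1 := hweak.2 v hv
  refine ⟨hu, ?_⟩
  calc limsup (fun r => (⨆ v ∈ E, fK μ K (u - v) r) / fK μ K u r) (𝓝[>] 0)
      ≤ ⨆ v ∈ E, g v u := limsup_iSup_fK_sub_div_fK_le hKopen hKbdd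
        (fun v hv => (hrep v hv).2.2.1) hcont.upperSemicontinuousAt
    _ ≤ 1 := iSup₂_le hdensity_le_one

/-- Proposition 4.6. Suppose that for each `v ∈ E` the translate
`μ_v = μ.map (· + v)` is absolutely continuous w.r.t. `μ` with representative `g v` of
`dμ_v/dμ` continuous on some open neighbourhood of `u`, and that `u` is an `E`-weak
mode. If `x ↦ sup_{v ∈ E} (dμ_v/dμ)(x)` is continuous at `u`, then `u` is an
`E`-strong mode. -/
theorem Estrong_of_Eweak_of_continuous_sup_density
    {X : Type*} [AddCommGroup X] [Module ℝ X] [TopologicalSpace X]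
    [IsTopologicalAddGroup X] [ContinuousSMul ℝ X] [T2Space X]
    [FirstCountableTopology X] [MeasurableSpace X] [BorelSpace X]
    (μ : Measure X) [SigmaFinite μ] (hμ : μ ≠ 0)
    (hfin : ∀ s : Set X, Bornology.IsVonNBounded ℝ s → μ s ≠ ⊤)
    (K : Set X) (hKopen : IsOpen K) (hK0 : (0:X) ∈ K)
    (hKbdd : Bornology.IsVonNBounded ℝ K)
    (u : X) (hu : u ∈ measSupport μ)
    (E : Set X) (hE : E.Nonempty)
    (g : X → X → ℝ≥0∞)
    (hrep : ∀ v ∈ E, Measurable (g v) ∧ μ.map (· + v) ≪ μ ∧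
      μ.map (· + v) = μ.withDensity (g v) ∧
      ∃ U : Set X, IsOpen U ∧ u ∈ U ∧ ContinuousOn (g v) U)
    (hweak : IsEWeakMode μ K E u)
    (hcont : ContinuousAt (fun x : X => ⨆ v ∈ E, g v x) u) :
    IsEStrongMode μ K E u :=
  Estrong_of_Eweak_of_continuous_sup_density_general μ hfin K hKopen hK0 hKbdd u hu E g hrep hweak
    hcont
end

section
/- Let X be a first countable Hausdorff complex topological vector space, μ a nonzero Borel measure on X that is finite on bounded sets, K a bounded open neighbourhood of the origin, and V a bounded open neighbourhood of the origin. For x ∈ X and ρ ∈ ℂ\{0} write φ(x,ρ) := μ(x + ρ·K). Suppose E ⊆ X is topologically dense in V, u ∈ supp(μ), and there exist v* ∈ E ∩ V and r* ∈ (0,1) such that φ(u−v*,ρ) = sup_{z∈u−(E∩V)} φ(z,ρ) for all ρ ∈ ℂ with 0 < |ρ| < r*. Then u is a local E-weak mode of μ with respect to V (i.e. lim_{|ρ|→0} (sup_{z∈u−(E∩V)} φ(z,ρ)) / φ(u,ρ) ≤ 1) if and only if u is a local strong mode of μ with respect to V (i.e. lim_{|ρ|→0} (sup_{z∈u−V}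 φ(z,ρ)) / φ(u,ρ) = 1). -/
open MeasureTheory Filter Set Topology
open scoped ENNReal NNReal

/-- `phiK μ K x ρ = μ(x + ρ • K)` for a complex scaling factor `ρ`. -/
noncomputable def phiK {X : Type*} [AddCommGroup X] [Module ℂ X] [MeasurableSpace X]
    (μ : Measure X) (K : Set X) (x : X) (ρ : ℂ) : ℝ≥0∞ :=
  μ ((fun y => x + ρ • y) '' K)

/-- The topological support of a Borel measure. -/
def measSupportC {X : Type*} [TopologicalSpace X] [MeasurableSpace X]
    (μ : Measure X) : Set X :=
  {x | ∀ U : Set X, IsOpen U → x ∈ U → 0 < μ U}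

/-!
For `ρ ≠ 0` the set `ρ • K` is open, and in a first countable group the measure of the translates
of an open set is lower semicontinuous in the translation: `x +ᵥ U` is the increasing countable
union of the parts of it that survive every translation by a point of a shrinking neighbourhood
of `x`. A lower semicontinuous function has the same supremum over a set as over its closure,
and `V ⊆ closure (E ∩ V)` because `V` is open; so the suprema of `φ(u - w, ρ)` over `E ∩ V` and
over `V` coincide for every `ρ ≠ 0`, and both mode conditions concern the same ratio. That ratio
is eventually `≥ 1` (take `w = 0`; `0 < φ(u, ρ) < ∞` as `u ∈ supp μ` and `K` is bounded), so its
`limsup` is `≤ 1` exactly when it tends to `1`.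
-/

open scoped Pointwise

theorem lowerSemicontinuous_measure_vadd {X : Type*} [AddGroup X] [TopologicalSpace X]
    [IsTopologicalAddGroup X] [FirstCountableTopology X] [MeasurableSpace X]
    (μ : Measure X) {U : Set X} (hU : IsOpen U) :
    LowerSemicontinuous fun x : X => μ (x +ᵥ U) := by
  intro x y hy
  obtain ⟨W, hW⟩ := (𝓝 x).exists_antitone_basis
  set B : ℕ → Set X := fun N => ⋂ x' ∈ W N, x' +ᵥ U
  have hB : Monotone B := fun M N hMN => biInter_mono (hW.antitone hMN) fun _ _ => le_rfl
  have hcover : x +ᵥ U ⊆ ⋃ N, B N := by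
    intro z hz
    have hnhds : {x' | -x' + z ∈ U} ∈ 𝓝 x :=
      (hU.preimage (by fun_prop)).mem_nhds (mem_vadd_set_iff_neg_vadd_mem.1 hz)
    obtain ⟨N, hN⟩ := hW.mem_iff.1 hnhds
    exact mem_iUnion.2 ⟨N, mem_iInter₂.2 fun x' hx' => mem_vadd_set_iff_neg_vadd_mem.2 (hN hx')⟩
  obtain ⟨N, hN⟩ : ∃ N, y < μ (B N) := by
    rw [← lt_iSup_iff, ← hB.measure_iUnion]
    exact hy.trans_le (measure_mono hcover)
  filter_upwards [hW.mem N] with x' hx'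
  exact hN.trans_le (measure_mono (biInter_subset_of_mem hx'))

theorem LowerSemicontinuous.biSup_closure {α β : Type*} [TopologicalSpace α]
    [CompleteLinearOrder β] [TopologicalSpace β] [OrderTopology β] {f : α → β}
    (hf : LowerSemicontinuous f) (s : Set α) :
    ⨆ x ∈ closure s, f x = ⨆ x ∈ s, f x :=
  le_antisymm
    (iSup₂_le fun _ hx => closure_minimal (fun _ hx => le_biSup f hx) (hf.isClosed_preimage _) hx)
    (biSup_mono fun _ hx => subset_closure hx)

theorem limsup_le_iff_tendsto_of_eventually_ge {α β : Type*} [CompleteLinearOrder β]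
    [TopologicalSpace β] [OrderTopology β] {l : Filter α} [l.NeBot] {f : α → β} {a : β}
    (h : ∀ᶠ x in l, a ≤ f x) : limsup f l ≤ a ↔ Tendsto f l (𝓝 a) :=
  ⟨tendsto_of_le_liminf_of_limsup_le (le_liminf_of_le (by isBoundedDefault) h),
    fun ht => ht.limsup_eq.le⟩

section phiK

variable {X : Type*} [AddCommGroup X] [Module ℂ X] [MeasurableSpace X] {μ : Measure X} {K : Set X}

theorem phiK_eq_measure_vadd (μ : Measure X) (K : Set X) (x : X) (ρ : ℂ) :
    phiK μ K x ρ = μ (x +ᵥ ρ • K) := by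
  rw [phiK, ← image_smul, ← image_vadd, image_image]
  rfl

variable [TopologicalSpace X]

theorem phiK_pos_of_mem_measSupportC [ContinuousAdd X] [ContinuousConstSMul ℂ X] (hK : IsOpen K)
    (hK0 : (0 : X) ∈ K) {u : X} (hu : u ∈ measSupportC μ) {ρ : ℂ} (hρ : ρ ≠ 0) :
    0 < phiK μ K u ρ := by
  rw [phiK_eq_measure_vadd]
  exact hu _ ((hK.smul₀ hρ).vadd u) ⟨0, ⟨0, hK0, smul_zero ρ⟩, add_zero u⟩

theorem phiK_ne_top [ContinuousAdd X] [ContinuousSMul ℂ X]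
    (hfin : ∀ s : Set X, Bornology.IsVonNBounded ℂ s → μ s ≠ ⊤)
    (hK : Bornology.IsVonNBounded ℂ K) (x : X) (ρ : ℂ) : phiK μ K x ρ ≠ ⊤ := by
  rw [phiK_eq_measure_vadd]
  refine hfin _ (Bornology.IsVonNBounded.vadd ?_ x)
  simpa [image_smul] using hK.image (ρ • ContinuousLinearMap.id ℂ X)

theorem lowerSemicontinuous_phiK [IsTopologicalAddGroup X] [ContinuousConstSMul ℂ X]
    [FirstCountableTopology X] (hK : IsOpen K) {ρ : ℂ} (hρ : ρ ≠ 0) :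
    LowerSemicontinuous fun x => phiK μ K x ρ := by
  simpa only [phiK_eq_measure_vadd] using lowerSemicontinuous_measure_vadd μ (hK.smul₀ hρ)

theorem biSup_inter_phiK_sub_eq [IsTopologicalAddGroup X] [ContinuousConstSMul ℂ X]
    [FirstCountableTopology X] (hK : IsOpen K) {V E : Set X} (hV : IsOpen V)
    (hE : V ⊆ closure E) (u : X) {ρ : ℂ} (hρ : ρ ≠ 0) :
    ⨆ w ∈ E ∩ V, phiK μ K (u - w) ρ = ⨆ w ∈ V, phiK μ K (u - w) ρ := by
  refine le_antisymm (biSup_mono fun _ => And.right) ?_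
  calc ⨆ w ∈ V, phiK μ K (u - w) ρ ≤ ⨆ w ∈ closure (E ∩ V), phiK μ K (u - w) ρ :=
        biSup_mono fun w hw => inter_comm V E ▸ hV.inter_closure ⟨hw, hE hw⟩
    _ = ⨆ w ∈ E ∩ V, phiK μ K (u - w) ρ :=
        ((lowerSemicontinuous_phiK hK hρ).comp (continuous_const.sub continuous_id)).biSup_closure _

end phiK

theorem local_Eweak_iff_local_strong_complex_general
    {X : Type*} [AddCommGroup X] [Module ℂ X] [TopologicalSpace X]
    [IsTopologicalAddGroup X] [ContinuousSMul ℂ X]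
    [FirstCountableTopology X] [MeasurableSpace X]
    (μ : Measure X)
    (hfin : ∀ s : Set X, Bornology.IsVonNBounded ℂ s → μ s ≠ ⊤)
    (K : Set X) (hKopen : IsOpen K) (hK0 : (0:X) ∈ K)
    (hKbdd : Bornology.IsVonNBounded ℂ K)
    (V : Set X) (hVopen : IsOpen V) (hV0 : (0:X) ∈ V)
    (E : Set X) (hE : V ⊆ closure E) (u : X) (hu : u ∈ measSupportC μ) :
    (limsup (fun ρ : ℂ => (⨆ w ∈ E ∩ V, phiK μ K (u - w) ρ) / phiK μ K u ρ)
        (𝓝[≠] (0:ℂ)) ≤ 1)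
      ↔ Tendsto (fun ρ : ℂ => (⨆ w ∈ V, phiK μ K (u - w) ρ) / phiK μ K u ρ)
          (𝓝[≠] (0:ℂ)) (𝓝 1) := by
  rw [limsup_congr (eventually_nhdsWithin_of_forall fun ρ hρ => by
    rw [biSup_inter_phiK_sub_eq hKopen hVopen hE u hρ])]
  refine limsup_le_iff_tendsto_of_eventually_ge (eventually_nhdsWithin_of_forall fun ρ hρ => ?_)
  have hle : phiK μ K u ρ ≤ ⨆ w ∈ V, phiK μ K (u - w) ρ := by
    simpa using le_biSup (fun w => phiK μ K (u - w) ρ) hV0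
  calc (1 : ℝ≥0∞) = phiK μ K u ρ / phiK μ K u ρ :=
        (ENNReal.div_self (phiK_pos_of_mem_measSupportC hKopen hK0 hu hρ).ne'
          (phiK_ne_top hfin hKbdd u ρ)).symm
    _ ≤ _ := ENNReal.div_le_div_right hle _

/-- Theorem 5.4, local modes. If `E` is topologically dense in the
bounded open neighbourhood `V` of the origin, `u ∈ supp(μ)`, and the local
`ℂ`-uniformity condition holds, then `u` is a local `E`-weak mode with respect to `V`
if and only if `u` is a local strong mode with respect to `V`. -/
theorem local_Eweak_iff_local_strong_complex
    {X : Type*} [AddCommGroup X] [Module ℂ X] [TopologicalSpace X]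
    [IsTopologicalAddGroup X] [ContinuousSMul ℂ X] [T2Space X]
    [FirstCountableTopology X] [MeasurableSpace X] [BorelSpace X]
    (μ : Measure X) (hμ : μ ≠ 0)
    (hfin : ∀ s : Set X, Bornology.IsVonNBounded ℂ s → μ s ≠ ⊤)
    (K : Set X) (hKopen : IsOpen K) (hK0 : (0:X) ∈ K)
    (hKbdd : Bornology.IsVonNBounded ℂ K)
    (V : Set X) (hVopen : IsOpen V) (hV0 : (0:X) ∈ V)
    (hVbdd : Bornology.IsVonNBounded ℂ V)
    (E : Set X) (hE : V ⊆ closure E) (u : X) (hu : u ∈ measSupportC μ)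
    (hunif : ∃ v ∈ E ∩ V, ∃ rs : ℝ, rs ∈ Set.Ioo (0:ℝ) 1 ∧
      ∀ ρ : ℂ, 0 < ‖ρ‖ → ‖ρ‖ < rs →
        phiK μ K (u - v) ρ = ⨆ w ∈ E ∩ V, phiK μ K (u - w) ρ) :
    (limsup (fun ρ : ℂ => (⨆ w ∈ E ∩ V, phiK μ K (u - w) ρ) / phiK μ K u ρ)
        (𝓝[≠] (0:ℂ)) ≤ 1)
      ↔ Tendsto (fun ρ : ℂ => (⨆ w ∈ V, phiK μ K (u - w) ρ) / phiK μ K u ρ)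
          (𝓝[≠] (0:ℂ)) (𝓝 1) :=
  local_Eweak_iff_local_strong_complex_general μ hfin K hKopen hK0 hKbdd V hVopen hV0 E hE u hu
end
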